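/- Let n ≥ 2 be an integer and let k = ⌊log_2 n⌋. Then the number of tuples (x_0,x_1,…,x_k) of nonnegative integers with ∑_{i=0}^k x_i 2^i = n (i.e., the number of binary partitions of n) equals, as a rational number, (1/k!) · ∑ ∏_{ℓ=1}^{k} ((n − j_1 − 2j_2 − ⋯ − 2^{k−1}j_k)/2^k + ℓ), where the sum runs over all tuples (j_1,…,j_k) of integers with 0 ≤ j_1 ≤ 2^k−1, 0 ≤ j_2 ≤ 2^{k−1}−1, …, 0 ≤ j_k ≤ 2−1, and j_1 + 2j_2 + ⋯ + 2^{k−1}j_k ≡ n (mod 2^k). -/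

import Mathlib

/-!
Write each part of a binary partition `x` of `n` as `x i = t i + 2^(k-i) s i` with
`t i < 2^(k-i)` (so `t k = 0`). Then `∑ x i 2^i = ∑ t i 2^i + 2^k ∑ s i`, so the partitions with
residue vector `t` correspond to the tuples `s ∈ ℕ^(k+1)` summing to `q = (n - ∑ t i 2^i) / 2^k`;
there are `C(q+k, k) = (1/k!) ∏_{ℓ=1}^{k} (q + ℓ)` of them. If instead `∑ t i 2^i > n`, the
bound `∑ t i 2^i ≤ k 2^k` puts `q` among `-k, …, -1`, so the product vanishes, as the fiber does.
-/

open Finset Nat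

theorem Finset.Nat.card_antidiagonalTuple_succ (k q : ℕ) :
    #(Finset.Nat.antidiagonalTuple (k + 1) q) = (q + k).choose k := by
  rw [← piAntidiag_univ_fin_eq_antidiagonalTuple]
  have := card_finsuppAntidiag_nat_eq_choose (s := (univ : Finset (Fin (k + 1)))) q
  rw [finsuppAntidiag, card_map, card_attach] at this
  rw [this, card_univ, Fintype.card_fin, show k + 1 + q - 1 = q + k by omega,
    Nat.choose_symm_add]

theorem Nat.prod_Icc_add_eq_factorial_mul_choose (q k : ℕ) :
    ∏ ℓ ∈ Icc 1 k, (q + ℓ) = k ! * (q + k).choose k := by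
  rw [← Nat.ascFactorial_eq_factorial_mul_choose, Nat.ascFactorial_eq_prod_range,
    range_eq_Ico, ← Finset.Ico_add_one_right_eq_Icc, ← prod_Ico_add' (fun ℓ => q + ℓ) 0 k 1]
  simp only [add_assoc, add_comm 1]

namespace BinaryPartition

variable {k : ℕ}

def lowPart (x : Fin (k + 1) → ℕ) : Fin k → ℕ := fun i => x i.castSucc % 2 ^ (k - i)

def highPart (x : Fin (k + 1) → ℕ) : Fin (k + 1) → ℕ := fun i => x i / 2 ^ (k - i)

def residueBox (k : ℕ) : Finset (Fin k → ℕ) :=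
  Fintype.piFinset fun i : Fin k => range (2 ^ (k - i))

theorem mem_residueBox {t : Fin k → ℕ} : t ∈ residueBox k ↔ ∀ i, t i < 2 ^ (k - i) := by
  simp [residueBox]

def ofParts (t : Fin k → ℕ) (s : Fin (k + 1) → ℕ) : Fin (k + 1) → ℕ :=
  fun i => Fin.snoc (α := fun _ => ℕ) t 0 i + 2 ^ (k - i) * s i

theorem sum_mul_two_pow_eq (x : Fin (k + 1) → ℕ) :
    ∑ i, x i * 2 ^ (i : ℕ) =
      ∑ i : Fin k, 2 ^ (i : ℕ) * lowPart x i + 2 ^ k * ∑ i, highPart x i := by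
  have split (i : Fin (k + 1)) :
      x i * 2 ^ (i : ℕ) = x i % 2 ^ (k - i) * 2 ^ (i : ℕ) + 2 ^ k * highPart x i := by
    conv_lhs => rw [← Nat.mod_add_div (x i) (2 ^ (k - i))]
    rw [add_mul, mul_right_comm, ← pow_add, Nat.sub_add_cancel (Nat.lt_succ_iff.mp i.isLt),
      highPart]
  rw [sum_congr rfl fun i _ => split i, sum_add_distrib, ← mul_sum, Fin.sum_univ_castSucc]
  simp [lowPart, mul_comm, Nat.mod_one]

theorem lowPart_mem_residueBox (x : Fin (k + 1) → ℕ) : lowPart x ∈ residueBox k :=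
  mem_residueBox.mpr fun _ => Nat.mod_lt _ (Nat.two_pow_pos _)

theorem sum_lowPart_le (x : Fin (k + 1) → ℕ) :
    ∑ i : Fin k, 2 ^ (i : ℕ) * lowPart x i ≤ ∑ i, x i * 2 ^ (i : ℕ) :=
  (sum_mul_two_pow_eq x).symm ▸ Nat.le_add_right _ _

theorem sum_lowPart_modEq (x : Fin (k + 1) → ℕ) :
    ∑ i : Fin k, 2 ^ (i : ℕ) * lowPart x i ≡ ∑ i, x i * 2 ^ (i : ℕ) [MOD 2 ^ k] := by
  rw [sum_mul_two_pow_eq x]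
  exact (Nat.add_mul_mod_self_left _ _ _).symm

section ofParts

variable {t : Fin k → ℕ}

theorem snoc_lt_two_pow (ht : t ∈ residueBox k)
    (i : Fin (k + 1)) : Fin.snoc (α := fun _ => ℕ) t 0 i < 2 ^ (k - i) := by
  induction i using Fin.lastCases with
  | last => simp
  | cast j => simpa using mem_residueBox.mp ht j

theorem lowPart_ofParts (ht : t ∈ residueBox k)
    (s : Fin (k + 1) → ℕ) : lowPart (ofParts t s) = t := by
  funext i
  have := snoc_lt_two_pow ht i.castSucc
  simp only [lowPart, ofParts, Fin.val_castSucc, Nat.add_mul_mod_self_left] at this ⊢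
  simpa using Nat.mod_eq_of_lt this

theorem highPart_ofParts (ht : t ∈ residueBox k)
    (s : Fin (k + 1) → ℕ) : highPart (ofParts t s) = s := by
  funext i
  rw [highPart, ofParts, Nat.add_mul_div_left _ _ (Nat.two_pow_pos _),
    Nat.div_eq_of_lt (snoc_lt_two_pow ht i), zero_add]

end ofParts

theorem ofParts_lowPart_highPart (x : Fin (k + 1) → ℕ) : ofParts (lowPart x) (highPart x) = x := by
  funext i
  induction i using Fin.lastCases with
  | last => simp [ofParts, highPart]
  | cast j => simp [ofParts, lowPart, highPart, Nat.mod_add_div]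

def binaryPartitions (k n : ℕ) : Finset (Fin (k + 1) → ℕ) :=
  (Fintype.piFinset fun _ => range (n + 1)).filter fun x => ∑ i, x i * 2 ^ (i : ℕ) = n

theorem mem_binaryPartitions {n : ℕ} {x : Fin (k + 1) → ℕ} :
    x ∈ binaryPartitions k n ↔ ∑ i, x i * 2 ^ (i : ℕ) = n := by
  refine ⟨fun hx => (mem_filter.mp hx).2, fun hx => mem_filter.mpr ⟨?_, hx⟩⟩
  refine Fintype.mem_piFinset.mpr fun i => mem_range.mpr (Nat.lt_succ_of_le ?_)
  calc x i ≤ x i * 2 ^ (i : ℕ) := Nat.le_mul_of_pos_right _ (Nat.two_pow_pos _)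
    _ ≤ n := hx ▸ single_le_sum (f := fun j => x j * 2 ^ (j : ℕ)) (by simp) (mem_univ i)

theorem ncard_setOf_sum_mul_two_pow_eq (k n : ℕ) :
    {x : Fin (k + 1) → ℕ | ∑ i, x i * 2 ^ (i : ℕ) = n}.ncard = #(binaryPartitions k n) := by
  rw [← Set.ncard_coe_finset]
  congr
  ext x
  exact mem_binaryPartitions.symm

theorem card_filter_lowPart_eq_choose {n q : ℕ} {t : Fin k → ℕ}
    (ht : t ∈ residueBox k)
    (hn : ∑ i : Fin k, 2 ^ (i : ℕ) * t i + 2 ^ k * q = n) :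
    #{x ∈ binaryPartitions k n | lowPart x = t} = (q + k).choose k := by
  rw [← Nat.card_antidiagonalTuple_succ]
  refine card_nbij' highPart (ofParts t) ?_ ?_ ?_ ?_
  · intro x hx
    obtain ⟨hxn, rfl⟩ := mem_filter.mp hx
    rw [mem_coe, Nat.mem_antidiagonalTuple]
    have := (sum_mul_two_pow_eq x).symm.trans (mem_binaryPartitions.mp hxn)
    exact Nat.eq_of_mul_eq_mul_left (Nat.two_pow_pos k) (Nat.add_left_cancel (this.trans hn.symm))
  · intro s hs
    rw [mem_coe, Nat.mem_antidiagonalTuple] at hs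
    refine mem_filter.mpr ⟨mem_binaryPartitions.mpr ?_, lowPart_ofParts ht s⟩
    rw [sum_mul_two_pow_eq, lowPart_ofParts ht, highPart_ofParts ht, hs, hn]
  · intro x hx
    obtain ⟨-, rfl⟩ := mem_filter.mp hx
    exact ofParts_lowPart_highPart x
  · intro s _
    exact highPart_ofParts ht s

theorem sum_two_pow_mul_le {t : Fin k → ℕ}
    (ht : t ∈ residueBox k) :
    ∑ i : Fin k, 2 ^ (i : ℕ) * t i ≤ k * 2 ^ k := by
  calc ∑ i : Fin k, 2 ^ (i : ℕ) * t i ≤ ∑ _i : Fin k, 2 ^ k := by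
        refine sum_le_sum fun i _ => ?_
        have hti := mem_residueBox.mp ht i
        calc 2 ^ (i : ℕ) * t i ≤ 2 ^ (i : ℕ) * 2 ^ (k - i) := by gcongr
          _ = 2 ^ k := by rw [← pow_add, Nat.add_sub_cancel' i.isLt.le]
    _ = k * 2 ^ k := by simp

theorem card_filter_lowPart_eq_prod {n : ℕ} {t : Fin k → ℕ}
    (ht : t ∈ residueBox k)
    (hmod : (∑ i : Fin k, 2 ^ (i : ℕ) * t i) % 2 ^ k = n % 2 ^ k) :
    (#{x ∈ binaryPartitions k n | lowPart x = t} : ℚ) =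
      1 / (k ! : ℚ) * ∏ ℓ ∈ Icc 1 k,
        (((n : ℚ) - ∑ i : Fin k, (2 : ℚ) ^ (i : ℕ) * (t i : ℚ)) / 2 ^ k + ℓ) := by
  set m := ∑ i : Fin k, 2 ^ (i : ℕ) * t i with hm
  have hmq : ∑ i : Fin k, (2 : ℚ) ^ (i : ℕ) * (t i : ℚ) = m := by simp [hm]
  rw [hmq]
  rcases le_or_gt m n with hmn | hnm
  · obtain ⟨q, hq⟩ := (Nat.modEq_iff_dvd' hmn).mp hmod
    have hn : m + 2 ^ k * q = n := by omega
    have hquot : ((n : ℚ) - m) / 2 ^ k = q := by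
      rw [← hn]; push_cast; field_simp; ring
    rw [card_filter_lowPart_eq_choose ht hn, hquot]
    have hprod : ∏ ℓ ∈ Icc 1 k, ((q : ℚ) + ℓ) = k ! * (q + k).choose k := by
      exact_mod_cast prod_Icc_add_eq_factorial_mul_choose q k
    rw [hprod]
    field_simp
  · obtain ⟨ℓ₀, hℓ₀⟩ := (Nat.modEq_iff_dvd' hnm.le).mp hmod.symm
    have hempty : {x ∈ binaryPartitions k n | lowPart x = t} = ∅ := by
      refine filter_eq_empty_iff.mpr fun x hx hxt => ?_
      have := sum_lowPart_le x
      rw [hxt, mem_binaryPartitions.mp hx] at this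
      omega
    have hℓ₀k : ℓ₀ ≤ k := by
      refine Nat.le_of_mul_le_mul_left ?_ (Nat.two_pow_pos k)
      calc 2 ^ k * ℓ₀ ≤ m := hℓ₀ ▸ Nat.sub_le m n
        _ ≤ 2 ^ k * k := mul_comm k (2 ^ k) ▸ sum_two_pow_mul_le ht
    have hℓ₀pos : 1 ≤ ℓ₀ := Nat.pos_of_ne_zero (by rintro rfl; omega)
    have hzero : ((n : ℚ) - m) / 2 ^ k + ℓ₀ = 0 := by
      have : m = n + 2 ^ k * ℓ₀ := by omega
      rw [this]; push_cast; field_simp; ring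
    rw [hempty, prod_eq_zero (mem_Icc.mpr ⟨hℓ₀pos, hℓ₀k⟩) hzero]
    simp

end BinaryPartition

open BinaryPartition in
theorem stmt_14_general (n k : ℕ) :
    (Set.ncard {x : Fin (k + 1) → ℕ |
        ∑ i : Fin (k + 1), x i * 2 ^ (i : ℕ) = n} : ℚ) =
      (1 / (Nat.factorial k : ℚ)) *
        ∑ t ∈ (Fintype.piFinset fun i : Fin k => Finset.range (2 ^ (k - (i : ℕ)))).filter
            (fun t => (∑ i : Fin k, 2 ^ (i : ℕ) * t i) % 2 ^ k = n % 2 ^ k),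
          ∏ ℓ ∈ Finset.Icc 1 k,
            (((n : ℚ) - ∑ i : Fin k, (2 : ℚ) ^ (i : ℕ) * (t i : ℚ)) / (2 : ℚ) ^ k
              + (ℓ : ℚ)) := by
  have hmaps : ∀ x ∈ binaryPartitions k n, lowPart x ∈ (residueBox k).filter
      (fun t => (∑ i : Fin k, 2 ^ (i : ℕ) * t i) % 2 ^ k = n % 2 ^ k) := fun x hx =>
    mem_filter.mpr ⟨lowPart_mem_residueBox x, mem_binaryPartitions.mp hx ▸ sum_lowPart_modEq x⟩
  rw [ncard_setOf_sum_mul_two_pow_eq, card_eq_sum_card_fiberwise hmaps, Nat.cast_sum, mul_sum]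
  refine sum_congr rfl fun t ht => ?_
  obtain ⟨ht, hmod⟩ := mem_filter.mp ht
  exact card_filter_lowPart_eq_prod ht hmod

/-- With `k = ⌊log_2 n⌋`, the number of binary partitions of `n` (tuples
`(x_0,…,x_k)` of nonnegative integers with `∑ x_i 2^i = n`) equals
`(1/k!) ∑ ∏_{ℓ=1}^{k} ((n - j_1 - 2 j_2 - ⋯ - 2^{k-1} j_k)/2^k + ℓ)`,
the sum over `0 ≤ j_1 ≤ 2^k - 1, 0 ≤ j_2 ≤ 2^{k-1} - 1, …, 0 ≤ j_k ≤ 1` with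
`j_1 + 2 j_2 + ⋯ + 2^{k-1} j_k ≡ n (mod 2^k)`. -/
theorem stmt_14 (n k : ℕ) (hn : 2 ≤ n) (hk : k = Nat.log 2 n) :
    (Set.ncard {x : Fin (k + 1) → ℕ |
        ∑ i : Fin (k + 1), x i * 2 ^ (i : ℕ) = n} : ℚ) =
      (1 / (Nat.factorial k : ℚ)) *
        ∑ t ∈ (Fintype.piFinset fun i : Fin k => Finset.range (2 ^ (k - (i : ℕ)))).filter
            (fun t => (∑ i : Fin k, 2 ^ (i : ℕ) * t i) % 2 ^ k = n % 2 ^ k),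
          ∏ ℓ ∈ Finset.Icc 1 k,
            (((n : ℚ) - ∑ i : Fin k, (2 : ℚ) ^ (i : ℕ) * (t i : ℚ)) / (2 : ℚ) ^ k
              + (ℓ : ℚ)) :=
  stmt_14_general n k
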